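/- arXiv:1912.06881 — 2 statements merged into one kernel-verified Lean document; each statement's English description precedes it below -/
import Mathlib

section
/- Let λ > 0, θ > 0, d ≥ 1, β ≥ 0, C ≥ 0, and α > (d + β)/(2θ). Then there is a constant c independent of λ ≥ 1 and of k such that for every k ∈ λ^{-1}ℤ^d, λ^{-d} · Σ_{p ∈ λ^{-1}ℤ^d} |p|^β / (|p|^{2θ} + |k - p|^{2θ} + C)^α ≤ c · (|k|^{2θ} + C)^{(β+d)/(2θ) - α}. -/
open ENNReal

/-!
Write `K = |k|^{2θ} + C` and `R = K^{1/(2θ)}`. Since `max (|p|, |k - p|) ≥ |k|/2`, the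
denominator is at least `(max (|p|, R) / 2)^{2θ}`, so each summand is at most
`2^{2θα} max (|p|, R)^{-s}` with `s = 2θα - β > d`. Cover the lattice by the dyadic balls
`|p| ≤ 2^{t+1} R`, each holding `O((λ 2^{t+1} R)^d)` points of `λ⁻¹ℤ^d`: the normalised sum of
`max (|p|, R)^{-s}` is then a geometric series in `2^{d-s}` times `R^{d-s} = K^{(β+d)/(2θ)-α}`.
Counting needs `λR` bounded below uniformly: by `C^{1/(2θ)}` if `C > 0`, and by `1` if `C = 0`,
because then `k ≠ 0` is a point of `λ⁻¹ℤ^d`.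
-/

section Pointwise

variable {E : Type*} [SeminormedAddCommGroup E] {a : ℝ}

theorem half_norm_rpow_le_add (ha : 0 ≤ a) (p k : E) :
    (‖k‖ / 2) ^ a ≤ ‖p‖ ^ a + ‖k - p‖ ^ a := by
  have htri : ‖k‖ / 2 ≤ max ‖p‖ ‖k - p‖ := by
    have := norm_add_le p (k - p)
    rw [add_sub_cancel] at this
    linarith [le_max_left ‖p‖ ‖k - p‖, le_max_right ‖p‖ ‖k - p‖]
  calc (‖k‖ / 2) ^ a ≤ max ‖p‖ ‖k - p‖ ^ a := by gcongr
    _ ≤ ‖p‖ ^ a + ‖k - p‖ ^ a := by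
        rcases le_total ‖p‖ ‖k - p‖ with h | h
        · rw [max_eq_right h]; exact le_add_of_nonneg_left (by positivity)
        · rw [max_eq_left h]; exact le_add_of_nonneg_right (by positivity)

theorem rpow_div_rpow_le_two_rpow_mul_max_rpow {α β C R : ℝ} (ha : 0 ≤ a) (hα : 0 ≤ α)
    (hβ : 0 ≤ β) (hC : 0 ≤ C) (hR : 0 < R) {p k : E} (hRk : R ^ a = ‖k‖ ^ a + C) :
    ‖p‖ ^ β / (‖p‖ ^ a + ‖k - p‖ ^ a + C) ^ α ≤ 2 ^ (a * α) * max ‖p‖ R ^ (β - a * α) := by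
  set x := max ‖p‖ R with hx_def
  have hx : 0 < x := lt_max_of_lt_right hR
  have hden : (x / 2) ^ a ≤ ‖p‖ ^ a + ‖k - p‖ ^ a + C := by
    rcases le_total ‖p‖ R with h | h
    · have h2 : (1 : ℝ) ≤ 2 ^ a := Real.one_le_rpow one_le_two ha
      calc (x / 2) ^ a = (‖k‖ ^ a + C) / 2 ^ a := by
            rw [hx_def, max_eq_right h, Real.div_rpow hR.le zero_le_two, hRk]
        _ ≤ (‖k‖ / 2) ^ a + C := by
            rw [add_div, Real.div_rpow (norm_nonneg k) zero_le_two]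
            gcongr
            exact div_le_self hC h2
        _ ≤ ‖p‖ ^ a + ‖k - p‖ ^ a + C := by gcongr; exact half_norm_rpow_le_add ha p k
    · calc (x / 2) ^ a ≤ ‖p‖ ^ a := by
            rw [hx_def, max_eq_left h]; gcongr; linarith [norm_nonneg p]
        _ ≤ ‖p‖ ^ a + ‖k - p‖ ^ a + C := by
            have : 0 ≤ ‖k - p‖ ^ a := by positivity
            linarith
  calc ‖p‖ ^ β / (‖p‖ ^ a + ‖k - p‖ ^ a + C) ^ α ≤ x ^ β / ((x / 2) ^ a) ^ α := by
        gcongr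
        exact le_max_left _ _
    _ = 2 ^ (a * α) * x ^ (β - a * α) := by
        rw [← Real.rpow_mul (by positivity), Real.div_rpow hx.le zero_le_two,
          Real.rpow_sub hx]
        field_simp

end Pointwise

noncomputable def latticePoint {ι : Type*} (lam : ℝ) (m : ι → ℤ) : EuclideanSpace ℝ ι :=
  (WithLp.equiv 2 (ι → ℝ)).symm fun i => (m i : ℝ) / lam

section Lattice

variable {ι : Type*} {lam : ℝ}

@[simp]
theorem latticePoint_zero (lam : ℝ) : latticePoint lam (0 : ι → ℤ) = 0 := by
  ext i; simp [latticePoint]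

variable [Fintype ι]

theorem abs_intCast_le_mul_norm_latticePoint (hlam : 0 < lam) (m : ι → ℤ) (i : ι) :
    |(m i : ℝ)| ≤ lam * ‖latticePoint lam m‖ := by
  have h := PiLp.norm_apply_le (latticePoint lam m) i
  rw [← div_le_iff₀' hlam]
  simpa [latticePoint, abs_div, abs_of_pos hlam] using h

theorem one_le_mul_norm_latticePoint (hlam : 0 < lam) {m : ι → ℤ} (hm : m ≠ 0) :
    1 ≤ lam * ‖latticePoint lam m‖ := by
  obtain ⟨i, hi⟩ := Function.ne_iff.mp hm
  calc (1 : ℝ) ≤ |(m i : ℝ)| := by exact_mod_cast Int.one_le_abs hi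
    _ ≤ lam * ‖latticePoint lam m‖ := abs_intCast_le_mul_norm_latticePoint hlam m i

theorem tsum_indicator_norm_latticePoint_le (hlam : 0 < lam) {r : ℝ} (hr : 0 ≤ r) (a : ℝ≥0∞) :
    ENNReal.ofReal (lam ^ (-(Fintype.card ι : ℝ))) *
        ∑' m, {m : ι → ℤ | ‖latticePoint lam m‖ ≤ r}.indicator (fun _ => a) m
      ≤ ENNReal.ofReal ((2 * r + lam⁻¹) ^ Fintype.card ι) * a := by
  classical
  set n := Fintype.card ι
  set N : ℕ := ⌊lam * r⌋₊
  set box : Finset (ι → ℤ) := Fintype.piFinset fun _ => Finset.Icc (-(N : ℤ)) N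
  have hbox : ∀ m ∉ box, {m : ι → ℤ | ‖latticePoint lam m‖ ≤ r}.indicator (fun _ => a) m = 0 := by
    intro m hm
    refine Set.indicator_of_notMem (fun hmr => hm ?_) _
    refine Fintype.mem_piFinset.mpr fun i => Finset.mem_Icc.mpr ?_
    have h : |(m i : ℝ)| < N + 1 := calc
      |(m i : ℝ)| ≤ lam * ‖latticePoint lam m‖ := abs_intCast_le_mul_norm_latticePoint hlam m i
      _ ≤ lam * r := by gcongr; exact hmr
      _ < N + 1 := Nat.lt_floor_add_one _
    have h' : |m i| < (N : ℤ) + 1 := by exact_mod_cast h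
    rw [abs_lt] at h'
    omega
  have hcard : (box.card : ℝ) ≤ (lam * (2 * r + lam⁻¹)) ^ n := by
    have hN : (2 * N + 1 : ℝ) ≤ lam * (2 * r + lam⁻¹) := by
      rw [mul_add, mul_inv_cancel₀ hlam.ne', mul_left_comm]
      gcongr
      exact Nat.floor_le (by positivity)
    simp only [box, Fintype.card_piFinset, Int.card_Icc, Finset.prod_const, Finset.card_univ]
    push_cast
    gcongr
    refine le_of_eq_of_le ?_ hN
    rw [show (N : ℤ) + 1 - -(N : ℤ) = ((2 * N + 1 : ℕ) : ℤ) by push_cast; ring, Int.toNat_natCast]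
    push_cast; ring
  calc ENNReal.ofReal (lam ^ (-(n : ℝ))) *
        ∑' m, {m : ι → ℤ | ‖latticePoint lam m‖ ≤ r}.indicator (fun _ => a) m
      ≤ ENNReal.ofReal (lam ^ (-(n : ℝ))) * (box.card * a) := by
        rw [tsum_eq_sum hbox]
        gcongr
        rw [← nsmul_eq_mul]
        exact Finset.sum_le_card_nsmul _ _ _ fun m _ =>
          Set.indicator_le_self' (fun _ _ => zero_le) m
    _ ≤ ENNReal.ofReal ((2 * r + lam⁻¹) ^ n) * a := by
        rw [← mul_assoc, ← ENNReal.ofReal_natCast, ← ENNReal.ofReal_mul (by positivity)]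
        gcongr
        calc lam ^ (-(n : ℝ)) * box.card ≤ lam ^ (-(n : ℝ)) * (lam * (2 * r + lam⁻¹)) ^ n := by
              gcongr
          _ = (2 * r + lam⁻¹) ^ n := by
              rw [mul_pow, ← mul_assoc, Real.rpow_neg hlam.le, Real.rpow_natCast,
                inv_mul_cancel₀ (by positivity), one_mul]

theorem tsum_indicator_norm_latticePoint_le_of_le_mul (hlam : 0 < lam) {γ r : ℝ} (hγ : 0 < γ)
    (hγr : γ ≤ lam * r) (a : ℝ≥0∞) :
    ENNReal.ofReal (lam ^ (-(Fintype.card ι : ℝ))) *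
        ∑' m, {m : ι → ℤ | ‖latticePoint lam m‖ ≤ r}.indicator (fun _ => a) m
      ≤ ENNReal.ofReal (((2 + γ⁻¹) * r) ^ Fintype.card ι) * a := by
  have hr : 0 ≤ r := nonneg_of_mul_nonneg_right (hγ.le.trans hγr) hlam
  refine (tsum_indicator_norm_latticePoint_le hlam hr a).trans ?_
  rw [add_mul, inv_mul_eq_div]
  gcongr
  rw [inv_eq_one_div, div_le_div_iff₀ hlam hγ]
  linarith

theorem exists_tsum_max_norm_latticePoint_rpow_neg_le {γ s : ℝ} (hγ : 0 < γ)
    (hs : (Fintype.card ι : ℝ) < s) :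
    ∃ c : ℝ≥0∞, c ≠ ⊤ ∧ ∀ lam R : ℝ, 0 < lam → 0 < R → γ ≤ lam * R →
      ENNReal.ofReal (lam ^ (-(Fintype.card ι : ℝ))) *
          ∑' m : ι → ℤ, ENNReal.ofReal (max ‖latticePoint lam m‖ R ^ (-s))
        ≤ c * ENNReal.ofReal (R ^ ((Fintype.card ι : ℝ) - s)) := by
  set n := Fintype.card ι
  set q : ℝ := 2 ^ ((n : ℝ) - s)
  have hq : ENNReal.ofReal q < 1 := by
    rw [ENNReal.ofReal_lt_one]
    exact Real.rpow_lt_one_of_one_lt_of_neg one_lt_two (by linarith)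
  refine ⟨ENNReal.ofReal (((2 + γ⁻¹) * 2) ^ n) * (1 - ENNReal.ofReal q)⁻¹,
    mul_ne_top ofReal_ne_top (inv_ne_top.mpr (tsub_pos_of_lt hq).ne'), ?_⟩
  intro lam R hlam hR hγR
  set A := ENNReal.ofReal (((2 + γ⁻¹) * 2) ^ n) * ENNReal.ofReal (R ^ ((n : ℝ) - s))
  set shell : ℕ → (ι → ℤ) → ℝ≥0∞ := fun t =>
    {m | ‖latticePoint lam m‖ ≤ R * 2 ^ (t + 1)}.indicator
      fun _ => ENNReal.ofReal ((R * 2 ^ t) ^ (-s))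
  have h_cover : ∀ m, ENNReal.ofReal (max ‖latticePoint lam m‖ R ^ (-s)) ≤ ∑' t, shell t m := by
    intro m
    have hx : 1 ≤ max ‖latticePoint lam m‖ R / R := by
      rw [le_div_iff₀ hR, one_mul]; exact le_max_right _ _
    obtain ⟨t, hlow, hupp⟩ := exists_nat_pow_near hx one_lt_two
    rw [le_div_iff₀ hR, mul_comm] at hlow
    rw [div_lt_iff₀ hR, mul_comm] at hupp
    refine le_trans ?_ (ENNReal.le_tsum t)
    have hmem : m ∈ {m | ‖latticePoint lam m‖ ≤ R * 2 ^ (t + 1)} :=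
      (le_max_left _ _).trans hupp.le
    simp only [shell, Set.indicator_of_mem hmem]
    exact ENNReal.ofReal_le_ofReal
      (Real.rpow_le_rpow_of_nonpos (by positivity) hlow (by linarith))
  have h_shell : ∀ t, ENNReal.ofReal (lam ^ (-(n : ℝ))) * ∑' m, shell t m
      ≤ A * ENNReal.ofReal q ^ t := by
    intro t
    have hγr : γ ≤ lam * (R * 2 ^ (t + 1)) :=
      hγR.trans (by gcongr; exact le_mul_of_one_le_right hR.le (one_le_pow₀ one_le_two))
    refine (tsum_indicator_norm_latticePoint_le_of_le_mul hlam hγ hγr _).trans (le_of_eq ?_)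
    have hsplit : ∀ x : ℝ, 0 < x → x ^ ((n : ℝ) - s) = x ^ n * x ^ (-s) := fun x hx => by
      rw [sub_eq_add_neg, Real.rpow_add hx, Real.rpow_natCast]
    have hq_pow : q ^ t = (2 ^ t : ℝ) ^ ((n : ℝ) - s) := by
      rw [← Real.rpow_natCast 2 t, ← Real.rpow_mul zero_le_two, mul_comm, Real.rpow_mul zero_le_two,
        Real.rpow_natCast]
    have key : ((2 + γ⁻¹) * (R * 2 ^ (t + 1))) ^ n * (R * 2 ^ t) ^ (-s)
        = ((2 + γ⁻¹) * 2) ^ n * R ^ ((n : ℝ) - s) * q ^ t := by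
      rw [hq_pow, hsplit R hR, hsplit _ (by positivity), Real.mul_rpow hR.le (by positivity),
        show (2 + γ⁻¹) * (R * 2 ^ (t + 1)) = (2 + γ⁻¹) * 2 * R * 2 ^ t by ring, mul_pow, mul_pow]
      ring
    rw [← ENNReal.ofReal_mul (by positivity), key, ENNReal.ofReal_mul (by positivity),
      ENNReal.ofReal_mul (by positivity), ENNReal.ofReal_pow (by positivity : (0 : ℝ) ≤ q)]
  calc ENNReal.ofReal (lam ^ (-(n : ℝ))) *
        ∑' m, ENNReal.ofReal (max ‖latticePoint lam m‖ R ^ (-s))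
      ≤ ENNReal.ofReal (lam ^ (-(n : ℝ))) * ∑' m, ∑' t, shell t m := by
        gcongr with m; exact h_cover m
    _ = ∑' t, ENNReal.ofReal (lam ^ (-(n : ℝ))) * ∑' m, shell t m := by
        rw [ENNReal.tsum_comm, ENNReal.tsum_mul_left]
    _ ≤ ∑' t : ℕ, A * ENNReal.ofReal q ^ t :=
        ENNReal.tsum_le_tsum h_shell
    _ = _ := by rw [ENNReal.tsum_mul_left, ENNReal.tsum_geometric]; ring

theorem exists_pos_le_mul_rpow_norm_latticePoint_add {a C : ℝ} (ha : 0 < a) (hC : 0 ≤ C) :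
    ∃ γ > 0, ∀ lam : ℝ, 1 ≤ lam → ∀ m : ι → ℤ, 0 < ‖latticePoint lam m‖ ^ a + C →
      γ ≤ lam * (‖latticePoint lam m‖ ^ a + C) ^ a⁻¹ := by
  rcases hC.eq_or_lt with rfl | hC
  · refine ⟨1, one_pos, fun lam hlam m hm => ?_⟩
    have hm0 : m ≠ 0 := by
      rintro rfl
      simp [Real.zero_rpow ha.ne'] at hm
    rw [add_zero, Real.rpow_rpow_inv (norm_nonneg _) ha.ne']
    exact one_le_mul_norm_latticePoint (by linarith) hm0
  · refine ⟨C ^ a⁻¹, by positivity, fun lam hlam m _ => ?_⟩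
    calc C ^ a⁻¹ ≤ (‖latticePoint lam m‖ ^ a + C) ^ a⁻¹ := by
          gcongr; exact le_add_of_nonneg_left (by positivity)
      _ ≤ lam * (‖latticePoint lam m‖ ^ a + C) ^ a⁻¹ := le_mul_of_one_le_left (by positivity) hlam

theorem exists_tsum_rpow_div_rpow_le {a α β C γ : ℝ} (ha : 0 ≤ a) (hα : 0 ≤ α) (hβ : 0 ≤ β)
    (hC : 0 ≤ C) (hγ : 0 < γ) (hs : (Fintype.card ι : ℝ) < a * α - β) :
    ∃ c : ℝ≥0∞, c ≠ ⊤ ∧ ∀ (lam R : ℝ) (k : EuclideanSpace ℝ ι), 0 < lam → 0 < R →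
      γ ≤ lam * R → R ^ a = ‖k‖ ^ a + C →
      ENNReal.ofReal (lam ^ (-(Fintype.card ι : ℝ))) * ∑' m : ι → ℤ,
          ENNReal.ofReal (‖latticePoint lam m‖ ^ β /
            (‖latticePoint lam m‖ ^ a + ‖k - latticePoint lam m‖ ^ a + C) ^ α)
        ≤ c * ENNReal.ofReal (R ^ ((Fintype.card ι : ℝ) - (a * α - β))) := by
  obtain ⟨c, hc, hc_le⟩ := exists_tsum_max_norm_latticePoint_rpow_neg_le hγ hs
  refine ⟨ENNReal.ofReal (2 ^ (a * α)) * c, mul_ne_top ofReal_ne_top hc,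
    fun lam R k hlam hR hγR hRk => ?_⟩
  calc _ ≤ ENNReal.ofReal (lam ^ (-(Fintype.card ι : ℝ))) * ∑' m : ι → ℤ,
          ENNReal.ofReal (2 ^ (a * α)) *
            ENNReal.ofReal (max ‖latticePoint lam m‖ R ^ (-(a * α - β))) := by
        gcongr with m
        rw [← ENNReal.ofReal_mul (by positivity), neg_sub]
        exact ENNReal.ofReal_le_ofReal
          (rpow_div_rpow_le_two_rpow_mul_max_rpow ha hα hβ hC hR hRk)
    _ = ENNReal.ofReal (2 ^ (a * α)) * (ENNReal.ofReal (lam ^ (-(Fintype.card ι : ℝ))) *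
          ∑' m, ENNReal.ofReal (max ‖latticePoint lam m‖ R ^ (-(a * α - β)))) := by
        rw [ENNReal.tsum_mul_left]; ring
    _ ≤ _ := by
        rw [mul_assoc]
        exact mul_le_mul_right (hc_le lam R hlam hR hγR) _

end Lattice

theorem lattice_sum_bound_general
    (θ : ℝ) (hθ : 0 < θ) (d : ℕ) (β C : ℝ) (hβ : 0 ≤ β) (hC : 0 ≤ C)
    (α : ℝ) (hα : (d + β) / (2 * θ) < α) :
    ∃ c : ℝ≥0∞, c ≠ ⊤ ∧ ∀ lam : ℝ, 1 ≤ lam → ∀ km : Fin d → ℤ,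
      (ENNReal.ofReal (lam ^ (-(d : ℝ)))) *
        ∑' m : Fin d → ℤ,
          (let p : EuclideanSpace ℝ (Fin d) :=
              (WithLp.equiv 2 (Fin d → ℝ)).symm fun i => (m i : ℝ) / lam
           let k : EuclideanSpace ℝ (Fin d) :=
              (WithLp.equiv 2 (Fin d → ℝ)).symm fun i => (km i : ℝ) / lam
           ENNReal.ofReal (‖p‖ ^ β / (‖p‖ ^ (2 * θ) + ‖k - p‖ ^ (2 * θ) + C) ^ α))
      ≤ c * (ENNReal.ofReal
          (‖(WithLp.equiv 2 (Fin d → ℝ)).symm (fun i => (km i : ℝ) / lam)‖ ^ (2 * θ) + C))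
            ^ ((β + d) / (2 * θ) - α) := by
  have h2θ : 0 < 2 * θ := by positivity
  have hα0 : 0 ≤ α := (by positivity : 0 ≤ (d + β) / (2 * θ)).trans hα.le
  have hs : (d : ℝ) < 2 * θ * α - β := by
    rw [div_lt_iff₀ h2θ] at hα
    linarith
  have he : (β + d) / (2 * θ) - α = ((d : ℝ) - (2 * θ * α - β)) / (2 * θ) := by
    field_simp
    ring
  obtain ⟨γ, hγ, hγ_le⟩ := exists_pos_le_mul_rpow_norm_latticePoint_add (ι := Fin d) h2θ hC
  obtain ⟨c, hc, hc_le⟩ :=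
    exists_tsum_rpow_div_rpow_le (ι := Fin d) h2θ.le hα0 hβ hC hγ (by simpa using hs)
  simp only [Fintype.card_fin] at hc_le
  -- The `+ 1` keeps the constant nonzero: if `K = 0`, the right-hand side is `(c + 1) * 0 ^ e = ⊤`.
  refine ⟨c + 1, by finiteness, fun lam hlam km => ?_⟩
  show _ ≤ _ * ENNReal.ofReal (‖latticePoint lam km‖ ^ (2 * θ) + C) ^ _
  set K := ‖latticePoint lam km‖ ^ (2 * θ) + C
  rcases (by positivity : 0 ≤ K).eq_or_lt with hK | hK
  · rw [← hK, ENNReal.ofReal_zero, he,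
      ENNReal.zero_rpow_of_neg (div_neg_of_neg_of_pos (by linarith) h2θ), ENNReal.mul_top (by simp)]
    exact le_top
  calc _ ≤ c * ENNReal.ofReal ((K ^ (2 * θ)⁻¹) ^ ((d : ℝ) - (2 * θ * α - β))) :=
        hc_le lam _ _ (by linarith) (by positivity) (hγ_le lam hlam km hK)
          (Real.rpow_inv_rpow hK.le h2θ.ne')
    _ = c * ENNReal.ofReal K ^ ((β + d) / (2 * θ) - α) := by
        rw [ENNReal.ofReal_rpow_of_pos hK, he, ← Real.rpow_mul hK.le, inv_mul_eq_div]
    _ ≤ _ := mul_le_mul_left le_self_add _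

/-- Riemann-sum bound, uniform in `λ ≥ 1`: for `θ > 0`, `d ≥ 1`, `β ≥ 0`, `C ≥ 0`,
`α > (d+β)/(2θ)`, and `k ∈ λ⁻¹ ℤ^d`,
`λ^{-d} ∑_{p ∈ λ⁻¹ℤ^d} |p|^β / (|p|^{2θ} + |k-p|^{2θ} + C)^α
  ≤ c (|k|^{2θ} + C)^{(β+d)/(2θ) - α}`. -/
theorem lattice_sum_bound
    (θ : ℝ) (hθ : 0 < θ) (d : ℕ) (hd : 1 ≤ d) (β C : ℝ) (hβ : 0 ≤ β) (hC : 0 ≤ C)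
    (α : ℝ) (hα : (d + β) / (2 * θ) < α) :
    ∃ c : ℝ≥0∞, c ≠ ⊤ ∧ ∀ lam : ℝ, 1 ≤ lam → ∀ km : Fin d → ℤ,
      (ENNReal.ofReal (lam ^ (-(d : ℝ)))) *
        ∑' m : Fin d → ℤ,
          (let p : EuclideanSpace ℝ (Fin d) :=
              (WithLp.equiv 2 (Fin d → ℝ)).symm fun i => (m i : ℝ) / lam
           let k : EuclideanSpace ℝ (Fin d) :=
              (WithLp.equiv 2 (Fin d → ℝ)).symm fun i => (km i : ℝ) / lam
           ENNReal.ofReal (‖p‖ ^ β / (‖p‖ ^ (2 * θ) + ‖k - p‖ ^ (2 * θ) + C) ^ α))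
      ≤ c * (ENNReal.ofReal
          (‖(WithLp.equiv 2 (Fin d → ℝ)).symm (fun i => (km i : ℝ) / lam)‖ ^ (2 * θ) + C))
            ^ ((β + d) / (2 * θ) - α) :=
  lattice_sum_bound_general θ hθ d β C hβ hC α hα
end

section
/- Let A be a densely defined dissipative linear operator on a Hilbert space H, and suppose that for every φ₀ in a dense subset U ⊆ D(A) there exists a solution φ ∈ C(ℝ₊; D(A)) ∩ C¹(ℝ₊; H) of the Kolmogorov equation ∂_t φ(t) = A φ(t) with φ(0) = φ₀. Then: (i) any such solution is unique and satisfies ‖φ(t)‖ ≤ ‖φ₀‖ for all t ≥ 0; (ii) the maps T_t φ₀ := φ(t) extend uniquely to a strongly continuous semigroup of contractions (T_t)_{t≥0} on H; (iii) A is closable and its closure is the generator of (T_t); (iv) for every φ₀ ∈ U and t ≥ 0, A T_t φ₀ = T_t A φ₀. -/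
/-!
Solutions of `∂ₜφ = Aφ` are contractive, since `d/dt ‖φ‖² = 2⟪φ, Aφ⟫ ≤ 0`; hence they are unique,
the solution maps are linear contractions on the (dense) space of solvable initial data, and they
extend to a strongly continuous contraction semigroup `T`.

Let `G` be the closure of the graph of `A` restricted to solvable data. The identity
`T t x - x = ∫₀ᵗ T s y ds` holds on that graph and passes to the closure, so `G` lies in the
(dissipative) graph of the generator. As `G` is closed and dissipative, the range of `I - G` is
closed; it is also dense, because `v ⊥ φ t - Aφ t` for all `t` makes `t ↦ ⟪v, φ t⟫` a bounded
solution of `f' = f`, hence zero. A dissipative relation containing `G` on which `I - ·` is onto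
equals `G`: applied to the generator and to the closure of the graph of `A`, both equal `G`.
-/

open Set Filter
open scoped RealInnerProductSpace Topology

/-- `φ` (with `ψ = A φ`) is a solution in `C(ℝ₊; D(A)) ∩ C¹(ℝ₊; H)` of the
Kolmogorov equation `∂ₜ φ = A φ` with initial condition `φ₀`. -/
def IsKolmogorovSolution {H : Type*} [NormedAddCommGroup H] [InnerProductSpace ℝ H]
    (A : H →ₗ.[ℝ] H) (φ₀ : H) (φ ψ : ℝ → H) : Prop :=
  φ 0 = φ₀ ∧ ContinuousOn φ (Ici (0 : ℝ)) ∧ ContinuousOn ψ (Ici (0 : ℝ)) ∧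
    ∀ t ∈ Ici (0 : ℝ), ∃ hmem : φ t ∈ A.domain,
      A ⟨φ t, hmem⟩ = ψ t ∧ HasDerivWithinAt φ (ψ t) (Ici (0 : ℝ)) t

theorem LinearPMap.mem_graph_iff_exists_mem_domain {R E F : Type*} [Ring R] [AddCommGroup E]
    [Module R E] [AddCommGroup F] [Module R F] {f : E →ₗ.[R] F} {x : E} {y : F} :
    (x, y) ∈ f.graph ↔ ∃ hx : x ∈ f.domain, f ⟨x, hx⟩ = y := by
  rw [LinearPMap.mem_graph_iff]
  constructor
  · rintro ⟨⟨x', hx'⟩, rfl, hy⟩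
    exact ⟨hx', hy⟩
  · rintro ⟨hx, hy⟩
    exact ⟨⟨x, hx⟩, rfl, hy⟩

theorem LinearPMap.isClosable_of_topologicalClosure_graph_le {R E F : Type*} [CommRing R]
    [AddCommGroup E] [AddCommGroup F] [Module R E] [Module R F] [TopologicalSpace E]
    [TopologicalSpace F] [ContinuousAdd E] [ContinuousAdd F] [TopologicalSpace R]
    [ContinuousSMul R E] [ContinuousSMul R F] {f : E →ₗ.[R] F} {G : Submodule R (E × F)}
    (hG : ∀ p ∈ G, p.1 = 0 → p.2 = 0) (h : f.graph.topologicalClosure ≤ G) : f.IsClosable :=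
  ⟨_, (Submodule.toLinearPMap_graph_eq _ fun p hp hp₁ => hG p (h hp) hp₁).symm⟩

theorem HasDerivWithinAt.tendsto_slope_zero_right_of_Ici {E : Type*} [NormedAddCommGroup E]
    [NormedSpace ℝ E] {f : ℝ → E} {f' : E} {x : ℝ} (h : HasDerivWithinAt f f' (Ici x) x) :
    Tendsto (fun t : ℝ => t⁻¹ • (f (x + t) - f x)) (𝓝[>] 0) (𝓝 f') := by
  have h' := (hasDerivWithinAt_iff_tendsto_slope' (lt_irrefl x)).1
    (hasDerivWithinAt_Ioi_iff_Ici.2 h)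
  have hmap : Tendsto (fun t : ℝ => x + t) (𝓝[>] 0) (𝓝[>] x) := by
    rw [Tendsto]; simp
  simpa [Function.comp_def, slope_def_module] using h'.comp hmap

theorem eq_zero_of_hasDerivWithinAt_self_of_abs_le {f : ℝ → ℝ} {C : ℝ}
    (hc : ContinuousOn f (Ici 0)) (hd : ∀ t, 0 ≤ t → HasDerivWithinAt f (f t) (Ici t) t)
    (hb : ∀ t, 0 ≤ t → |f t| ≤ C) : f 0 = 0 := by
  set g : ℝ → ℝ := fun t => Real.exp (-t) * f t
  have hg : ∀ t, 0 ≤ t → g t = f 0 := by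
    intro t ht
    have hconst := constant_of_has_deriv_right_zero (f := g) (a := 0) (b := t)
      (((Real.continuous_exp.comp continuous_neg).continuousOn).mul (hc.mono Icc_subset_Ici_self))
      (fun s hs => by
        have hexp := ((Real.hasDerivAt_exp (-s)).comp s (hasDerivAt_neg s)).hasDerivWithinAt
          (s := Ici s)
        exact (hexp.mul (hd s hs.1)).congr_deriv (by simp))
      t ⟨ht, le_rfl⟩
    simpa [g] using hconst
  have hbound : ∀ t, 0 ≤ t → |f 0| ≤ Real.exp (-t) * C := by
    intro t ht
    rw [← hg t ht, abs_mul, Real.abs_exp]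
    exact mul_le_mul_of_nonneg_left (hb t ht) (Real.exp_pos _).le
  have hlim : Tendsto (fun t => Real.exp (-t) * C) atTop (𝓝 0) := by
    simpa using Real.tendsto_exp_neg_atTop_nhds_zero.mul_const C
  exact abs_nonpos_iff.1 (ge_of_tendsto hlim ((eventually_ge_atTop 0).mono hbound))

section DissipativeRelation

variable {H : Type*} [NormedAddCommGroup H] [InnerProductSpace ℝ H]

def IsDissipative (G : Submodule ℝ (H × H)) : Prop :=
  ∀ p ∈ G, ⟪p.1, p.2⟫ ≤ 0

theorem norm_le_norm_fst_sub_snd {p : H × H} (hp : ⟪p.1, p.2⟫ ≤ 0) :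
    ‖p‖ ≤ ‖p.1 - p.2‖ := by
  have h := norm_sub_sq_real p.1 p.2
  refine norm_prod_le_iff.2 ⟨?_, ?_⟩ <;>
    refine le_of_sq_le_sq ?_ (norm_nonneg _) <;> nlinarith [sq_nonneg ‖p.1‖, sq_nonneg ‖p.2‖]

theorem IsDissipative.topologicalClosure {G : Submodule ℝ (H × H)} (hG : IsDissipative G) :
    IsDissipative G.topologicalClosure := fun _ hp =>
  closure_minimal (t := {p : H × H | ⟪p.1, p.2⟫ ≤ 0}) hG
    (isClosed_le (continuous_fst.inner continuous_snd) continuous_const) hp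

theorem IsDissipative.mono {G G' : Submodule ℝ (H × H)} (hG' : IsDissipative G') (h : G ≤ G') :
    IsDissipative G := fun p hp => hG' p (h hp)

theorem IsDissipative.isClosed_map_fst_sub_snd [CompleteSpace H] {G : Submodule ℝ (H × H)}
    (hG : IsDissipative G) (hclosed : IsClosed (G : Set (H × H))) :
    IsClosed (G.map (LinearMap.fst ℝ H H - LinearMap.snd ℝ H H) : Set H) := by
  have : CompleteSpace G := hclosed.completeSpace_coe
  let L : G →L[ℝ] H :=
    (ContinuousLinearMap.fst ℝ H H - ContinuousLinearMap.snd ℝ H H).comp G.subtypeL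
  have hL : AntilipschitzWith 1 L :=
    L.antilipschitz_of_bound fun p => by
      simpa [L] using norm_le_norm_fst_sub_snd (hG p p.2)
  convert hL.isClosed_range L.uniformContinuous
  ext x
  simp [L]

theorem IsDissipative.le_of_le_of_map_eq_top {G G' : Submodule ℝ (H × H)} (hG' : IsDissipative G')
    (hle : G ≤ G') (htop : G.map (LinearMap.fst ℝ H H - LinearMap.snd ℝ H H) = ⊤) :
    G' ≤ G := by
  intro p hp
  obtain ⟨q, hq, hpq⟩ : p.1 - p.2 ∈ G.map (LinearMap.fst ℝ H H - LinearMap.snd ℝ H H) :=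
    htop ▸ Submodule.mem_top
  simp only [LinearMap.sub_apply, LinearMap.fst_apply, LinearMap.snd_apply] at hpq
  have hdiff : ‖p - q‖ ≤ 0 := by
    have := norm_le_norm_fst_sub_snd (hG' _ (sub_mem hp (hle hq)))
    rwa [Prod.fst_sub, Prod.snd_sub, sub_sub_sub_comm, hpq, sub_self, norm_zero] at this
  rwa [sub_eq_zero.1 (norm_le_zero_iff.1 hdiff)]

end DissipativeRelation

section OperatorFamily

variable {E : Type*} [NormedAddCommGroup E] [NormedSpace ℝ E]

theorem continuousOn_apply_of_dense {T : ℝ → E →L[ℝ] E} {s : Set ℝ}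
    (hT : ∀ t ∈ s, ‖T t‖ ≤ 1) {D : Set E} (hD : Dense D)
    (hcont : ∀ x ∈ D, ContinuousOn (fun t => T t x) s) (x : E) :
    ContinuousOn (fun t => T t x) s := by
  refine continuousOn_of_uniform_approx_of_continuousOn fun u hu => ?_
  obtain ⟨ε, hε, hεu⟩ := Metric.mem_uniformity_dist.1 hu
  obtain ⟨y, hy, hxy⟩ := Metric.mem_closure_iff.1 (hD x) ε hε
  refine ⟨fun t => T t y, hcont y hy, fun t ht => hεu ?_⟩
  rw [dist_eq_norm, ← map_sub]
  calc ‖T t (x - y)‖ ≤ ‖T t‖ * ‖x - y‖ := (T t).le_opNorm _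
    _ ≤ 1 * ‖x - y‖ := by gcongr; exact hT t ht
    _ < ε := by rw [one_mul, ← dist_eq_norm]; exact hxy

variable (T : ℝ → E →L[ℝ] E)

def generatorGraph : Submodule ℝ (E × E) where
  carrier := {p | Tendsto (fun t : ℝ => t⁻¹ • (T t p.1 - p.1)) (𝓝[>] 0) (𝓝 p.2)}
  add_mem' {p q} hp hq := by
    simpa only [mem_ofPred_eq, Prod.fst_add, Prod.snd_add, map_add, add_sub_add_comm, smul_add]
      using hp.add hq
  zero_mem' := by simp
  smul_mem' c p hp := by
    simpa only [mem_ofPred_eq, Prod.smul_fst, Prod.smul_snd, map_smul, ← smul_sub, smul_comm _ c]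
      using hp.const_smul c

variable {T}

theorem snd_eq_zero_of_mem_generatorGraph {p : E × E} (hp : p ∈ generatorGraph T)
    (hp₁ : p.1 = 0) : p.2 = 0 := by
  have hp' : Tendsto (fun t : ℝ => t⁻¹ • (T t p.1 - p.1)) (𝓝[>] 0) (𝓝 p.2) := hp
  simp only [hp₁, map_zero, sub_zero, smul_zero] at hp'
  exact tendsto_nhds_unique hp' tendsto_const_nhds

theorem mem_generatorGraph_of_integral [CompleteSpace E]
    (hT₀ : T 0 = ContinuousLinearMap.id ℝ E) {x y : E}
    (hcont : ContinuousOn (fun t => T t y) (Ici 0))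
    (hint : ∀ t, 0 ≤ t → T t x - x = ∫ s in (0 : ℝ)..t, T s y) :
    (x, y) ∈ generatorGraph T := by
  have hderiv : HasDerivWithinAt (fun t => ∫ s in (0 : ℝ)..t, T s y) (T 0 y) (Ici 0) 0 :=
    intervalIntegral.integral_hasDerivWithinAt_right (by simp)
      ((hcont.mono Ioi_subset_Ici_self).stronglyMeasurableAtFilter_nhdsWithin measurableSet_Ioi 0)
      ((hcont 0 self_mem_Ici).mono Ioi_subset_Ici_self)
  have hslope := hderiv.tendsto_slope_zero_right_of_Ici
  rw [hT₀] at hslope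
  refine hslope.congr' ?_
  filter_upwards [self_mem_nhdsWithin] with t (ht : 0 < t)
  simp [hint t ht.le]

theorem lipschitzWith_integral_apply (hT : ∀ t, 0 ≤ t → ‖T t‖ ≤ 1)
    (hcont : ∀ x, ContinuousOn (fun t => T t x) (Ici 0)) {t : ℝ} (ht : 0 ≤ t) :
    LipschitzWith t.toNNReal fun y => ∫ s in (0 : ℝ)..t, T s y := by
  have hint : ∀ y, IntervalIntegrable (fun s => T s y) MeasureTheory.volume 0 t := fun y =>
    ((hcont y).mono Icc_subset_Ici_self).intervalIntegrable_of_Icc ht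
  refine LipschitzWith.of_dist_le_mul fun y z => ?_
  rw [dist_eq_norm, dist_eq_norm, ← intervalIntegral.integral_sub (hint y) (hint z),
    Real.coe_toNNReal _ ht, mul_comm]
  have := intervalIntegral.norm_integral_le_of_norm_le_const (a := 0) (b := t)
    (f := fun s => T s y - T s z) (C := ‖y - z‖) fun s hs => by
      rw [← map_sub]
      exact (T s).le_of_opNorm_le (hT s (uIoc_of_le ht ▸ hs).1.le) _ |>.trans (by rw [one_mul])
  rwa [sub_zero, abs_of_nonneg ht] at this

theorem isClosed_setOf_integral (hT : ∀ t, 0 ≤ t → ‖T t‖ ≤ 1)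
    (hcont : ∀ x, ContinuousOn (fun t => T t x) (Ici 0)) :
    IsClosed {p : E × E | ∀ t, 0 ≤ t → T t p.1 - p.1 = ∫ s in (0 : ℝ)..t, T s p.2} := by
  simp only [ofPred_forall]
  exact isClosed_iInter fun t => isClosed_iInter fun ht => isClosed_eq
    (((T t).continuous.comp continuous_fst).sub continuous_fst)
    ((lipschitzWith_integral_apply hT hcont ht).continuous.comp continuous_snd)

end OperatorFamily

theorem isDissipative_generatorGraph {H : Type*} [NormedAddCommGroup H] [InnerProductSpace ℝ H]
    {T : ℝ → H →L[ℝ] H} (hT : ∀ t, 0 ≤ t → ‖T t‖ ≤ 1) : IsDissipative (generatorGraph T) := by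
  intro p hp
  refine le_of_tendsto ((tendsto_const_nhds (x := p.1)).inner hp) ?_
  filter_upwards [self_mem_nhdsWithin] with t (ht : 0 < t)
  have hle : ⟪p.1, T t p.1⟫ ≤ ⟪p.1, p.1⟫ := by
    rw [real_inner_self_eq_norm_sq, sq]
    exact (real_inner_le_norm _ _).trans
      (mul_le_mul_of_nonneg_left ((T t).le_of_opNorm_le (hT t ht.le) _ |>.trans (by rw [one_mul]))
        (norm_nonneg _))
  rw [real_inner_smul_right, inner_sub_right]
  exact mul_nonpos_of_nonneg_of_nonpos (inv_nonneg.2 ht.le) (sub_nonpos.2 hle)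

section Kolmogorov

variable {H : Type*} [NormedAddCommGroup H] [InnerProductSpace ℝ H] {A : H →ₗ.[ℝ] H}

theorem isDissipative_graph (hdiss : ∀ φ : A.domain, ⟪(φ : H), A φ⟫ ≤ 0) :
    IsDissipative A.graph := by
  intro p hp
  obtain ⟨y, rfl⟩ := (LinearPMap.mem_graph_iff' A).1 hp
  exact hdiss y

theorem isKolmogorovSolution_iff {x : H} {φ ψ : ℝ → H} :
    IsKolmogorovSolution A x φ ψ ↔ φ 0 = x ∧ ContinuousOn φ (Ici 0) ∧ ContinuousOn ψ (Ici 0) ∧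
      ∀ t ∈ Ici (0 : ℝ), (φ t, ψ t) ∈ A.graph ∧ HasDerivWithinAt φ (ψ t) (Ici 0) t := by
  simp only [IsKolmogorovSolution, LinearPMap.mem_graph_iff_exists_mem_domain, exists_and_right]

theorem isKolmogorovSolution_zero : IsKolmogorovSolution A 0 0 0 :=
  isKolmogorovSolution_iff.2 ⟨rfl, continuousOn_const, continuousOn_const, fun _ _ =>
    ⟨zero_mem _, hasDerivWithinAt_const _ _ _⟩⟩

namespace IsKolmogorovSolution

variable {x x' : H} {φ φ' ψ ψ' : ℝ → H}

theorem add (h : IsKolmogorovSolution A x φ ψ) (h' : IsKolmogorovSolution A x' φ' ψ') :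
    IsKolmogorovSolution A (x + x') (φ + φ') (ψ + ψ') := by
  obtain ⟨h0, hφ, hψ, hg⟩ := isKolmogorovSolution_iff.1 h
  obtain ⟨h0', hφ', hψ', hg'⟩ := isKolmogorovSolution_iff.1 h'
  exact isKolmogorovSolution_iff.2 ⟨by simp [h0, h0'], hφ.add hφ', hψ.add hψ', fun t ht =>
    ⟨add_mem (hg t ht).1 (hg' t ht).1, (hg t ht).2.add (hg' t ht).2⟩⟩

theorem smul (c : ℝ) (h : IsKolmogorovSolution A x φ ψ) :
    IsKolmogorovSolution A (c • x) (c • φ) (c • ψ) := by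
  obtain ⟨h0, hφ, hψ, hg⟩ := isKolmogorovSolution_iff.1 h
  exact isKolmogorovSolution_iff.2 ⟨by simp [h0], hφ.const_smul c, hψ.const_smul c, fun t ht =>
    ⟨Submodule.smul_mem _ c (hg t ht).1, (hg t ht).2.const_smul c⟩⟩

theorem sub (h : IsKolmogorovSolution A x φ ψ) (h' : IsKolmogorovSolution A x' φ' ψ') :
    IsKolmogorovSolution A (x - x') (φ - φ') (ψ - ψ') := by
  simpa [sub_eq_add_neg] using h.add (h'.smul (-1))

theorem shift (h : IsKolmogorovSolution A x φ ψ) {s : ℝ} (hs : 0 ≤ s) :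
    IsKolmogorovSolution A (φ s) (fun t => φ (t + s)) (fun t => ψ (t + s)) := by
  obtain ⟨-, hφ, hψ, hg⟩ := isKolmogorovSolution_iff.1 h
  have hmaps : MapsTo (· + s) (Ici (0 : ℝ)) (Ici 0) := fun t (ht : 0 ≤ t) =>
    show 0 ≤ t + s by linarith
  have hcont : ContinuousOn (· + s) (Ici (0 : ℝ)) := (continuous_add_const s).continuousOn
  refine isKolmogorovSolution_iff.2 ⟨by simp, hφ.comp hcont hmaps, hψ.comp hcont hmaps,
    fun t ht => ⟨(hg _ (hmaps ht)).1, ?_⟩⟩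
  simpa [Function.comp_def] using
    (hg _ (hmaps ht)).2.scomp t ((hasDerivAt_id t).add_const s).hasDerivWithinAt hmaps

theorem mem_graph (h : IsKolmogorovSolution A x φ ψ) {t : ℝ} (ht : 0 ≤ t) :
    (φ t, ψ t) ∈ A.graph :=
  ((isKolmogorovSolution_iff.1 h).2.2.2 t ht).1

theorem hasDerivWithinAt_Ici (h : IsKolmogorovSolution A x φ ψ) {t : ℝ} (ht : 0 ≤ t) :
    HasDerivWithinAt φ (ψ t) (Ici t) t :=
  ((isKolmogorovSolution_iff.1 h).2.2.2 t ht).2.mono (Ici_subset_Ici.2 ht)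

theorem norm_le (hA : IsDissipative A.graph) (h : IsKolmogorovSolution A x φ ψ) {t : ℝ}
    (ht : 0 ≤ t) : ‖φ t‖ ≤ ‖x‖ := by
  obtain ⟨h0, hφ, -, -⟩ := isKolmogorovSolution_iff.1 h
  have hsq : ‖φ t‖ ^ 2 ≤ ‖x‖ ^ 2 :=
    image_le_of_deriv_right_le_deriv_boundary (f := (‖φ ·‖ ^ 2)) (B := fun _ => ‖x‖ ^ 2)
      (f' := fun s => 2 * ⟪φ s, ψ s⟫) (B' := 0)
      ((hφ.mono Icc_subset_Ici_self).norm.pow 2)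
      (fun s hs => (h.hasDerivWithinAt_Ici hs.1).norm_sq) (by rw [h0]) continuousOn_const
      (fun _ _ => hasDerivWithinAt_const _ _ _)
      (fun s hs => by have := hA _ (h.mem_graph hs.1); simp only [Pi.zero_apply]; linarith)
      ⟨ht, le_rfl⟩
  exact pow_le_pow_iff_left₀ (norm_nonneg _) (norm_nonneg _) two_ne_zero |>.1 hsq

theorem unique (hA : IsDissipative A.graph) (h : IsKolmogorovSolution A x φ ψ)
    (h' : IsKolmogorovSolution A x φ' ψ') {t : ℝ} (ht : 0 ≤ t) : φ t = φ' t := by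
  simpa [sub_eq_zero] using (h.sub h').norm_le hA ht

theorem inner_eq_zero_of_forall_inner_sub (hA : IsDissipative A.graph)
    (h : IsKolmogorovSolution A x φ ψ) {v : H}
    (hv : ∀ t, 0 ≤ t → ⟪v, φ t - ψ t⟫ = 0) : ⟪v, x⟫ = 0 := by
  obtain ⟨h0, hφ, -, -⟩ := isKolmogorovSolution_iff.1 h
  rw [← h0]
  refine eq_zero_of_hasDerivWithinAt_self_of_abs_le (C := ‖v‖ * ‖x‖)
    (continuousOn_const.inner hφ) (fun t ht => ?_) (fun t ht => ?_)
  · have hvt := hv t ht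
    rw [inner_sub_right, sub_eq_zero] at hvt
    rw [hvt]
    exact (hasDerivWithinAt_const t _ v).inner ℝ (h.hasDerivWithinAt_Ici ht) |>.congr_deriv
      (by simp)
  · exact (abs_real_inner_le_norm _ _).trans
      (mul_le_mul_of_nonneg_left (h.norm_le hA ht) (norm_nonneg _))

end IsKolmogorovSolution

end Kolmogorov

section KolmogorovSemigroup

variable {H : Type*} [NormedAddCommGroup H] [InnerProductSpace ℝ H] {A : H →ₗ.[ℝ] H}

variable (A) in
def solvableData : Submodule ℝ H where
  carrier := {x | ∃ φ ψ : ℝ → H, IsKolmogorovSolution A x φ ψ}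
  add_mem' := fun ⟨_, _, h⟩ ⟨_, _, h'⟩ => ⟨_, _, h.add h'⟩
  zero_mem' := ⟨_, _, isKolmogorovSolution_zero⟩
  smul_mem' c _ := fun ⟨_, _, h⟩ => ⟨_, _, h.smul c⟩

namespace solvableData

noncomputable def solution {x : H} (hx : x ∈ solvableData A) : ℝ → H :=
  Classical.choose hx

theorem exists_isKolmogorovSolution {x : H} (hx : x ∈ solvableData A) :
    ∃ ψ, IsKolmogorovSolution A x (solution hx) ψ :=
  Classical.choose_spec hx

theorem solution_eq (hA : IsDissipative A.graph) {x : H} (hx : x ∈ solvableData A)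
    {φ ψ : ℝ → H} (h : IsKolmogorovSolution A x φ ψ) {t : ℝ} (ht : 0 ≤ t) :
    solution hx t = φ t :=
  (exists_isKolmogorovSolution hx).choose_spec.unique hA h ht

end solvableData

open solvableData

-- Solutions are unique only for `t ≥ 0`, so the time is clamped to keep the map linear.
noncomputable def kolmogorovFlow (hA : IsDissipative A.graph) (t : ℝ) :
    solvableData A →L[ℝ] H :=
  LinearMap.mkContinuous
    { toFun := fun ξ => solution ξ.2 (max t 0)
      map_add' := fun ξ η => by
        obtain ⟨ψ, h⟩ := exists_isKolmogorovSolution ξ.2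
        obtain ⟨ψ', h'⟩ := exists_isKolmogorovSolution η.2
        exact solution_eq hA (ξ + η).2 (h.add h') (le_max_right t 0)
      map_smul' := fun c ξ => by
        obtain ⟨ψ, h⟩ := exists_isKolmogorovSolution ξ.2
        exact solution_eq hA (c • ξ).2 (h.smul c) (le_max_right t 0) }
    1 fun ξ => by
      obtain ⟨ψ, h⟩ := exists_isKolmogorovSolution ξ.2
      simpa using h.norm_le hA (le_max_right t 0)

theorem solvableData_ext (hS : Dense (solvableData A : Set H)) {f g : H →L[ℝ] H}
    (h : ∀ x φ ψ, IsKolmogorovSolution A x φ ψ → f x = g x) : f = g :=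
  ContinuousLinearMap.ext_on (hS.mono Submodule.subset_span) fun _ ⟨φ, ψ, hx⟩ => h _ φ ψ hx

noncomputable def kolmogorovSemigroup [CompleteSpace H] (hA : IsDissipative A.graph) (t : ℝ) :
    H →L[ℝ] H :=
  (kolmogorovFlow hA t).extend (solvableData A).subtypeL

variable (A) in
def kolmogorovGraph : Submodule ℝ (H × H) := A.graph ⊓ (solvableData A).prod ⊤

theorem IsKolmogorovSolution.mem_kolmogorovGraph {x : H} {φ ψ : ℝ → H}
    (h : IsKolmogorovSolution A x φ ψ) {t : ℝ} (ht : 0 ≤ t) : (φ t, ψ t) ∈ kolmogorovGraph A :=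
  ⟨h.mem_graph ht, ⟨_, _, h.shift ht⟩, trivial⟩

variable [CompleteSpace H] (hA : IsDissipative A.graph) (hS : Dense (solvableData A : Set H))
include hA hS

theorem IsKolmogorovSolution.kolmogorovSemigroup_apply {x : H} {φ ψ : ℝ → H}
    (h : IsKolmogorovSolution A x φ ψ) {t : ℝ} (ht : 0 ≤ t) :
    kolmogorovSemigroup hA t x = φ t := by
  have hx : x ∈ solvableData A := ⟨φ, ψ, h⟩
  refine (ContinuousLinearMap.extend_eq (e := (solvableData A).subtypeL) _ hS.denseRange_val
    isUniformEmbedding_subtype_val.isUniformInducing ⟨x, hx⟩).trans ?_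
  simpa [kolmogorovFlow, max_eq_left ht] using solution_eq hA hx h ht

theorem norm_kolmogorovSemigroup_le (t : ℝ) : ‖kolmogorovSemigroup hA t‖ ≤ 1 :=
  calc ‖kolmogorovSemigroup hA t‖ ≤ 1 * ‖kolmogorovFlow hA t‖ :=
        ContinuousLinearMap.opNorm_extend_le (e := (solvableData A).subtypeL) (N := 1) _
          hS.denseRange_val fun _ => by simp
    _ ≤ 1 := by rw [one_mul]; exact LinearMap.mkContinuous_norm_le _ zero_le_one _

theorem kolmogorovSemigroup_zero : kolmogorovSemigroup hA 0 = ContinuousLinearMap.id ℝ H :=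
  solvableData_ext hS fun _ _ _ h => by rw [h.kolmogorovSemigroup_apply hA hS le_rfl, h.1]; rfl

theorem kolmogorovSemigroup_add {s t : ℝ} (hs : 0 ≤ s) (ht : 0 ≤ t) :
    kolmogorovSemigroup hA (s + t) = (kolmogorovSemigroup hA s).comp (kolmogorovSemigroup hA t) :=
  solvableData_ext hS fun _ _ _ h => by
    rw [ContinuousLinearMap.comp_apply, h.kolmogorovSemigroup_apply hA hS ht,
      (h.shift ht).kolmogorovSemigroup_apply hA hS hs,
      h.kolmogorovSemigroup_apply hA hS (add_nonneg hs ht)]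

theorem continuousOn_kolmogorovSemigroup_apply (x : H) :
    ContinuousOn (fun t => kolmogorovSemigroup hA t x) (Ici 0) :=
  continuousOn_apply_of_dense (fun t _ => norm_kolmogorovSemigroup_le hA hS t) hS
    (fun _ ⟨_, _, h⟩ => h.2.1.congr fun _ ht => h.kolmogorovSemigroup_apply hA hS ht) x

theorem IsKolmogorovSolution.eq_kolmogorovSemigroup_apply {x : H} {φ ψ : ℝ → H}
    (h : IsKolmogorovSolution A x φ ψ) {t : ℝ} (ht : 0 ≤ t) :
    ψ t = kolmogorovSemigroup hA t (ψ 0) := by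
  have hslope := ((kolmogorovSemigroup hA t).continuous.tendsto (ψ 0)).comp
    (h.hasDerivWithinAt_Ici le_rfl).tendsto_slope_zero_right_of_Ici
  refine tendsto_nhds_unique (h.hasDerivWithinAt_Ici ht).tendsto_slope_zero_right_of_Ici
    (hslope.congr' ?_)
  filter_upwards [self_mem_nhdsWithin] with s (hs : 0 < s)
  rw [Function.comp_apply, zero_add, map_smul, map_sub, h.1, h.kolmogorovSemigroup_apply hA hS ht,
    (h.shift hs.le).kolmogorovSemigroup_apply hA hS ht]

theorem IsKolmogorovSolution.kolmogorovSemigroup_sub_eq_integral {x : H} {φ ψ : ℝ → H}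
    (h : IsKolmogorovSolution A x φ ψ) {t : ℝ} (ht : 0 ≤ t) :
    kolmogorovSemigroup hA t x - x = ∫ s in (0 : ℝ)..t, kolmogorovSemigroup hA s (ψ 0) := by
  obtain ⟨h0, hφ, hψ, -⟩ := isKolmogorovSolution_iff.1 h
  rw [h.kolmogorovSemigroup_apply hA hS ht, ← h0,
    intervalIntegral.integral_congr (g := ψ) fun s hs =>
      (h.eq_kolmogorovSemigroup_apply hA hS (uIcc_of_le ht ▸ hs).1).symm,
    intervalIntegral.integral_eq_sub_of_hasDeriv_right_of_le ht (hφ.mono Icc_subset_Ici_self)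
      (fun s hs => (h.hasDerivWithinAt_Ici hs.1.le).mono Ioi_subset_Ici_self)
      ((hψ.mono Icc_subset_Ici_self).intervalIntegrable_of_Icc ht)]

theorem topologicalClosure_kolmogorovGraph_le_generatorGraph :
    (kolmogorovGraph A).topologicalClosure ≤ generatorGraph (kolmogorovSemigroup hA) := by
  intro p hp
  refine mem_generatorGraph_of_integral (kolmogorovSemigroup_zero hA hS)
    (continuousOn_kolmogorovSemigroup_apply hA hS p.2) ?_
  refine closure_minimal (fun q ⟨hq, ⟨φ, ψ, h⟩, _⟩ t ht => ?_)
    (isClosed_setOf_integral (fun t _ => norm_kolmogorovSemigroup_le hA hS t)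
      (continuousOn_kolmogorovSemigroup_apply hA hS)) hp
  have hq₂ : q.2 = ψ 0 := A.mem_graph_snd_inj' hq (h.mem_graph le_rfl) h.1.symm
  rw [hq₂]
  exact h.kolmogorovSemigroup_sub_eq_integral hA hS ht

theorem isDissipative_generatorGraph_kolmogorovSemigroup :
    IsDissipative (generatorGraph (kolmogorovSemigroup hA)) :=
  isDissipative_generatorGraph fun t _ => norm_kolmogorovSemigroup_le hA hS t

theorem map_topologicalClosure_kolmogorovGraph_eq_top :
    (kolmogorovGraph A).topologicalClosure.map (LinearMap.fst ℝ H H - LinearMap.snd ℝ H H) = ⊤ := by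
  set G := (kolmogorovGraph A).topologicalClosure
  have hG : IsDissipative G := (isDissipative_generatorGraph_kolmogorovSemigroup hA hS).mono
    (topologicalClosure_kolmogorovGraph_le_generatorGraph hA hS)
  have hclosed := hG.isClosed_map_fst_sub_snd (kolmogorovGraph A).isClosed_topologicalClosure
  rw [← hclosed.submodule_topologicalClosure_eq, Submodule.topologicalClosure_eq_top_iff,
    Submodule.eq_bot_iff]
  intro v hv
  refine hS.eq_zero_of_inner_left ℝ fun x ⟨φ, ψ, h⟩ =>
    h.inner_eq_zero_of_forall_inner_sub hA fun t ht => ?_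
  rw [real_inner_comm]
  exact (Submodule.mem_orthogonal _ v).1 hv _
    ⟨(φ t, ψ t), (kolmogorovGraph A).le_topologicalClosure (h.mem_kolmogorovGraph ht), rfl⟩

theorem generatorGraph_kolmogorovSemigroup_eq :
    generatorGraph (kolmogorovSemigroup hA) = (kolmogorovGraph A).topologicalClosure :=
  le_antisymm
    ((isDissipative_generatorGraph_kolmogorovSemigroup hA hS).le_of_le_of_map_eq_top
      (topologicalClosure_kolmogorovGraph_le_generatorGraph hA hS)
      (map_topologicalClosure_kolmogorovGraph_eq_top hA hS))
    (topologicalClosure_kolmogorovGraph_le_generatorGraph hA hS)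

theorem topologicalClosure_graph_eq_generatorGraph :
    A.graph.topologicalClosure = generatorGraph (kolmogorovSemigroup hA) := by
  have hle : (kolmogorovGraph A).topologicalClosure ≤ A.graph.topologicalClosure :=
    Submodule.topologicalClosure_mono inf_le_left
  rw [generatorGraph_kolmogorovSemigroup_eq hA hS]
  exact le_antisymm (hA.topologicalClosure.le_of_le_of_map_eq_top hle
    (map_topologicalClosure_kolmogorovGraph_eq_top hA hS)) hle

end KolmogorovSemigroup

theorem closure_generates_semigroup_general
    {H : Type*} [NormedAddCommGroup H] [InnerProductSpace ℝ H] [CompleteSpace H]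
    (A : H →ₗ.[ℝ] H)
    (hdiss : ∀ φ : A.domain, ⟪(φ : H), A φ⟫ ≤ 0)
    (U : Set H) (hU : ∀ x ∈ U, x ∈ A.domain) (hUdense : Dense U)
    (hsol : ∀ φ₀ ∈ U, ∃ φ ψ : ℝ → H, IsKolmogorovSolution A φ₀ φ ψ) :
    ∃ T : ℝ → H →L[ℝ] H,
      -- contraction semigroup, strongly continuous
      (∀ t, 0 ≤ t → ‖T t‖ ≤ 1) ∧
      T 0 = ContinuousLinearMap.id ℝ H ∧
      (∀ s t, 0 ≤ s → 0 ≤ t → T (s + t) = (T s).comp (T t)) ∧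
      (∀ x : H, ContinuousOn (fun t => T t x) (Ici (0 : ℝ))) ∧
      -- (i) uniqueness and contractivity of solutions; `T` extends the solution maps
      (∀ φ₀, ∀ _ : φ₀ ∈ U, ∀ φ ψ, IsKolmogorovSolution A φ₀ φ ψ →
        ∀ t, 0 ≤ t → φ t = T t φ₀ ∧ ‖φ t‖ ≤ ‖φ₀‖) ∧
      -- (ii) uniqueness of the extension among strongly continuous contraction semigroups
      (∀ T' : ℝ → H →L[ℝ] H,
        (∀ t, 0 ≤ t → ‖T' t‖ ≤ 1) →
        T' 0 = ContinuousLinearMap.id ℝ H →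
        (∀ s t, 0 ≤ s → 0 ≤ t → T' (s + t) = (T' s).comp (T' t)) →
        (∀ x : H, ContinuousOn (fun t => T' t x) (Ici (0 : ℝ))) →
        (∀ φ₀, ∀ _ : φ₀ ∈ U, ∀ φ ψ, IsKolmogorovSolution A φ₀ φ ψ →
          ∀ t, 0 ≤ t → φ t = T' t φ₀) →
        ∀ t, 0 ≤ t → T' t = T t) ∧
      -- (iii) `A` is closable and its closure is the Hille–Yosida generator of `T`
      A.IsClosable ∧
      (∀ x : H, (x ∈ A.closure.domain ↔
        ∃ y : H, Tendsto (fun t : ℝ => t⁻¹ • (T t x - x)) (𝓝[>] (0 : ℝ)) (𝓝 y))) ∧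
      (∀ x : A.closure.domain,
        Tendsto (fun t : ℝ => t⁻¹ • (T t (x : H) - (x : H))) (𝓝[>] (0 : ℝ))
          (𝓝 (A.closure x))) ∧
      -- (iv) commutation of `A` with the semigroup on `U`
      (∀ φ₀, ∀ hφ₀ : φ₀ ∈ U, ∀ t, 0 ≤ t →
        ∃ hm : T t φ₀ ∈ A.domain, A ⟨T t φ₀, hm⟩ = T t (A ⟨φ₀, hU φ₀ hφ₀⟩)) := by
  have hA : IsDissipative A.graph := isDissipative_graph hdiss
  have hS : Dense (solvableData A : Set H) := hUdense.mono hsol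
  have hgraph := topologicalClosure_graph_eq_generatorGraph hA hS
  have hclosable : A.IsClosable := LinearPMap.isClosable_of_topologicalClosure_graph_le
    (fun _ hp => snd_eq_zero_of_mem_generatorGraph hp) hgraph.le
  have hclosure : A.closure.graph = generatorGraph (kolmogorovSemigroup hA) :=
    hclosable.graph_closure_eq_closure_graph.symm.trans hgraph
  refine ⟨kolmogorovSemigroup hA, fun t _ => norm_kolmogorovSemigroup_le hA hS t,
    kolmogorovSemigroup_zero hA hS, fun s t hs ht => kolmogorovSemigroup_add hA hS hs ht,
    continuousOn_kolmogorovSemigroup_apply hA hS,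
    fun φ₀ _ φ ψ h t ht => ⟨(h.kolmogorovSemigroup_apply hA hS ht).symm, h.norm_le hA ht⟩,
    fun T' _ _ _ _ hT' t ht => ContinuousLinearMap.ext_on (hUdense.mono Submodule.subset_span)
      fun u hu => ?_, hclosable, fun x => ?_, fun x => ?_, fun φ₀ hφ₀ t ht => ?_⟩
  · obtain ⟨φ, ψ, h⟩ := hsol u hu
    rw [← hT' u hu φ ψ h t ht, h.kolmogorovSemigroup_apply hA hS ht]
  · rw [LinearPMap.mem_domain_iff, hclosure]
    rfl
  · have hx := A.closure.mem_graph x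
    rw [hclosure] at hx
    exact hx
  · obtain ⟨φ, ψ, h⟩ := hsol φ₀ hφ₀
    have hψ₀ : A ⟨φ₀, hU φ₀ hφ₀⟩ = ψ 0 :=
      A.mem_graph_snd_inj (A.mem_graph _) (h.mem_graph le_rfl) h.1.symm
    rw [hψ₀, ← LinearPMap.mem_graph_iff_exists_mem_domain, h.kolmogorovSemigroup_apply hA hS ht,
      ← h.eq_kolmogorovSemigroup_apply hA hS ht]
    exact h.mem_graph ht

/-- Lemma (closure): if `A` is densely defined and dissipative and the Kolmogorov
equation `∂ₜφ = Aφ` is solvable in `C(ℝ₊;D(A)) ∩ C¹(ℝ₊;H)` for every initial datum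
in a dense set `U ⊆ D(A)`, then: solutions are unique and contractive; the solution
maps extend uniquely to a strongly continuous contraction semigroup `(T_t)`;
`A` is closable and its closure is the (Hille–Yosida) generator of `(T_t)`;
and `A T_t φ₀ = T_t A φ₀` for `φ₀ ∈ U`. -/
theorem closure_generates_semigroup
    {H : Type*} [NormedAddCommGroup H] [InnerProductSpace ℝ H] [CompleteSpace H]
    (A : H →ₗ.[ℝ] H)
    (hdense : Dense (A.domain : Set H))
    (hdiss : ∀ φ : A.domain, ⟪(φ : H), A φ⟫ ≤ 0)
    (U : Set H) (hU : ∀ x ∈ U, x ∈ A.domain) (hUdense : Dense U)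
    (hsol : ∀ φ₀ ∈ U, ∃ φ ψ : ℝ → H, IsKolmogorovSolution A φ₀ φ ψ) :
    ∃ T : ℝ → H →L[ℝ] H,
      -- contraction semigroup, strongly continuous
      (∀ t, 0 ≤ t → ‖T t‖ ≤ 1) ∧
      T 0 = ContinuousLinearMap.id ℝ H ∧
      (∀ s t, 0 ≤ s → 0 ≤ t → T (s + t) = (T s).comp (T t)) ∧
      (∀ x : H, ContinuousOn (fun t => T t x) (Ici (0 : ℝ))) ∧
      -- (i) uniqueness and contractivity of solutions; `T` extends the solution maps
      (∀ φ₀, ∀ _ : φ₀ ∈ U, ∀ φ ψ, IsKolmogorovSolution A φ₀ φ ψ →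
        ∀ t, 0 ≤ t → φ t = T t φ₀ ∧ ‖φ t‖ ≤ ‖φ₀‖) ∧
      -- (ii) uniqueness of the extension among strongly continuous contraction semigroups
      (∀ T' : ℝ → H →L[ℝ] H,
        (∀ t, 0 ≤ t → ‖T' t‖ ≤ 1) →
        T' 0 = ContinuousLinearMap.id ℝ H →
        (∀ s t, 0 ≤ s → 0 ≤ t → T' (s + t) = (T' s).comp (T' t)) →
        (∀ x : H, ContinuousOn (fun t => T' t x) (Ici (0 : ℝ))) →
        (∀ φ₀, ∀ _ : φ₀ ∈ U, ∀ φ ψ, IsKolmogorovSolution A φ₀ φ ψ →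
          ∀ t, 0 ≤ t → φ t = T' t φ₀) →
        ∀ t, 0 ≤ t → T' t = T t) ∧
      -- (iii) `A` is closable and its closure is the Hille–Yosida generator of `T`
      A.IsClosable ∧
      (∀ x : H, (x ∈ A.closure.domain ↔
        ∃ y : H, Tendsto (fun t : ℝ => t⁻¹ • (T t x - x)) (𝓝[>] (0 : ℝ)) (𝓝 y))) ∧
      (∀ x : A.closure.domain,
        Tendsto (fun t : ℝ => t⁻¹ • (T t (x : H) - (x : H))) (𝓝[>] (0 : ℝ))
          (𝓝 (A.closure x))) ∧
      -- (iv) commutation of `A` with the semigroup on `U`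
      (∀ φ₀, ∀ hφ₀ : φ₀ ∈ U, ∀ t, 0 ≤ t →
        ∃ hm : T t φ₀ ∈ A.domain, A ⟨T t φ₀, hm⟩ = T t (A ⟨φ₀, hU φ₀ hφ₀⟩)) :=
  closure_generates_semigroup_general A hdiss U hU hUdense hsol
end
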